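/- Let I be a monomial ideal of S = k[x_1,...,x_n] satisfying property N_k. Then for any subset U ⊆ {1,...,n}, the restriction I(U) also satisfies property N_k. -/

import Mathlib

/- # Preliminary definitions

We work in the polynomial ring `S = k[x_1,…,x_n]`, realized as `MvPolynomial (Fin n) kk`.

* Graded pieces of `Tor_i^S(M, k)` are realized via the (graded) Koszul complex
  `M ⊗ Λ•(S^n)`: the degree-`j` strand in homological degree `i` is the complex
  whose `i`-th term is the direct sum over `i`-subsets `T` of the variables of the
  degree `j - i` graded piece of `M`.  `TorNonzero` expresses nonvanishing of the
  homology of this strand, i.e. `Tor_i^S(M, k)_j ≠ 0`.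
* `reg` is the Castelnuovo–Mumford regularity `max { j - i | Tor_i(M,k)_j ≠ 0 }`.
* `SatisfiesN I d p` says the minimal free resolution of `I` is linear for the first
  `p - 1` steps (with generators in degree `d`), i.e. `Tor_i(I,k)_j = 0` unless
  `j = d + i`, for all `i < p`.  `SatisfiesN I d 2` is "linearly presented". -/

open MvPolynomial

/-- The `i`-th term of the Koszul complex on the variables of `k[x_1,…,x_n]`,
with coefficients in the ring itself: a copy of `S` for each `i`-subset of variables. -/
abbrev KModule (kk : Type) [Field kk] (n : ℕ) (i : ℕ) : Type :=
  {T : Finset (Fin n) // T.card = i} → MvPolynomial (Fin n) kk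

/-- The Koszul differential `K_{m+1} → K_m`. -/
noncomputable def Dmap (kk : Type) [Field kk] (n : ℕ) (m : ℕ) :
    KModule kk n (m + 1) →ₗ[kk] KModule kk n m where
  toFun f T := ∑ t ∈ (T.1ᶜ).attach,
    ((-1 : kk) ^ ((T.1.filter (fun s => s < t.1)).card)) •
      (X t.1 * f ⟨insert t.1 T.1, by
        rw [Finset.card_insert_of_notMem (Finset.mem_compl.mp t.2), T.2]⟩)
  map_add' f g := by
    funext T
    simp [mul_add, smul_add, Finset.sum_add_distrib]
  map_smul' c f := by
    funext T
    dsimp only [RingHom.id_apply, Pi.smul_apply]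
    rw [Finset.smul_sum]
    refine Finset.sum_congr rfl fun t _ => ?_
    rw [mul_smul_comm, smul_comm]

/-- The Koszul differential out of homological degree `i` (the zero map for `i = 0`). -/
noncomputable def Dout (kk : Type) [Field kk] (n : ℕ) :
    (i : ℕ) → (KModule kk n i →ₗ[kk] KModule kk n (i - 1))
  | 0 => 0
  | (m + 1) => Dmap kk n m

/-- The degree-`m` graded piece of an ideal `I ⊆ k[x_1,…,x_n]`,
as a `k`-subspace (zero in negative degrees). -/
noncomputable def gradedPiece {kk : Type} [Field kk] {n : ℕ}
    (I : Ideal (MvPolynomial (Fin n) kk)) (m : ℤ) :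
    Submodule kk (MvPolynomial (Fin n) kk) :=
  if m < 0 then ⊥
  else (Submodule.restrictScalars kk I) ⊓ (homogeneousSubmodule (Fin n) kk m.toNat)

/-- The degree-`j` strand of the Koszul complex of `I` in homological degree `i`. -/
noncomputable def koszulStrand {kk : Type} [Field kk] {n : ℕ}
    (I : Ideal (MvPolynomial (Fin n) kk)) (i : ℕ) (j : ℤ) :
    Submodule kk (KModule kk n i) :=
  Submodule.pi Set.univ (fun _ => gradedPiece I (j - i))

/-- `TorNonzero I i j` states that `Tor_i^S(I, k)_j ≠ 0`, computed as the homology of the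
degree-`j` strand of the Koszul complex of `I`. -/
noncomputable def TorNonzero {kk : Type} [Field kk] {n : ℕ}
    (I : Ideal (MvPolynomial (Fin n) kk)) (i : ℕ) (j : ℤ) : Prop :=
  ¬ ((koszulStrand I i j ⊓ LinearMap.ker (Dout kk n i)) ≤
      Submodule.map (Dmap kk n i) (koszulStrand I (i + 1) j))

/-- The Castelnuovo–Mumford regularity of an ideal `I ⊆ k[x_1,…,x_n]`:
`reg I = max { j - i : Tor_i^S(I,k)_j ≠ 0 }`. -/
noncomputable def reg {kk : Type} [Field kk] {n : ℕ}
    (I : Ideal (MvPolynomial (Fin n) kk)) : ℤ :=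
  sSup { r : ℤ | ∃ (i : ℕ) (j : ℤ), TorNonzero I i j ∧ r = j - i }

/-- Property `N_p` for the ideal `I` (with generators in degree `d`): the minimal graded free
resolution of `I` is linear for `p - 1` steps, i.e. `Tor_i^S(I,k)_j = 0` for `i < p`
unless `j = d + i`. -/
noncomputable def SatisfiesN {kk : Type} [Field kk] {n : ℕ}
    (I : Ideal (MvPolynomial (Fin n) kk)) (d : ℕ) (p : ℕ) : Prop :=
  ∀ i : ℕ, i < p → ∀ j : ℤ, TorNonzero I i j → j = (d : ℤ) + i

/-- The squarefree monomial `∏_{i ∈ T} x_i`. -/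
noncomputable def sqMonomial (kk : Type) [Field kk] {n : ℕ} (T : Finset (Fin n)) :
    MvPolynomial (Fin n) kk :=
  ∏ i ∈ T, X i

/-- `I` is a squarefree monomial ideal generated (up to minimality) by squarefree
monomials of degree `d`. -/
def IsSqfreeMonomialIdealGenInDeg {kk : Type} [Field kk] {n : ℕ}
    (I : Ideal (MvPolynomial (Fin n) kk)) (d : ℕ) : Prop :=
  ∃ G : Set (Finset (Fin n)), (∀ T ∈ G, T.card = d) ∧ I = Ideal.span (sqMonomial kk '' G)

/-- `I` is a squarefree monomial ideal. -/
def IsSqfreeMonomialIdeal {kk : Type} [Field kk] {n : ℕ}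
    (I : Ideal (MvPolynomial (Fin n) kk)) : Prop :=
  ∃ G : Set (Finset (Fin n)), I = Ideal.span (sqMonomial kk '' G)

/-- `I` is a monomial ideal. -/
def IsMonomialIdeal {kk : Type} [Field kk] {n : ℕ}
    (I : Ideal (MvPolynomial (Fin n) kk)) : Prop :=
  ∃ A : Set (Fin n →₀ ℕ), I = Ideal.span ((fun a => monomial a (1 : kk)) '' A)

/-- The monomial with exponent vector `a` is a minimal monomial generator of the
monomial ideal `I`: it lies in `I` and no proper monomial divisor of it lies in `I`. -/
def IsMinGen {kk : Type} [Field kk] {n : ℕ}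
    (I : Ideal (MvPolynomial (Fin n) kk)) (a : Fin n →₀ ℕ) : Prop :=
  monomial a (1 : kk) ∈ I ∧ ∀ b : Fin n →₀ ℕ, b ≤ a → monomial b (1 : kk) ∈ I → b = a

/-- The (total) degree of the monomial with exponent vector `a`. -/
def degExp {n : ℕ} (a : Fin n →₀ ℕ) : ℕ := a.sum fun _ e => e

/-- The graph `G_I` on the minimal monomial generators of `I` (encoded by their exponent
vectors), where two distinct generators `u, v` are adjacent iff `deg lcm(u,v) = d + 1`. -/
def genGraph {kk : Type} [Field kk] {n : ℕ}
    (I : Ideal (MvPolynomial (Fin n) kk)) (d : ℕ) : SimpleGraph (Fin n →₀ ℕ) where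
  Adj u v := IsMinGen I u ∧ IsMinGen I v ∧ u ≠ v ∧ degExp (u ⊔ v) = d + 1
  symm := by
    refine ⟨fun u v h => ?_⟩
    refine ⟨h.2.1, h.1, h.2.2.1.symm, ?_⟩
    rw [sup_comm]
    exact h.2.2.2
  loopless := by
    refine ⟨fun u h => ?_⟩
    exact h.2.2.1 rfl

/-- `G_I(u,v)` is connected: the subgraph of `G_I` induced on the minimal generators
dividing `lcm(u,v)` is connected. -/
def GIConnected {kk : Type} [Field kk] {n : ℕ}
    (I : Ideal (MvPolynomial (Fin n) kk)) (d : ℕ) (u v : Fin n →₀ ℕ) : Prop :=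
  ((genGraph I d).induce {w : Fin n →₀ ℕ | IsMinGen I w ∧ w ≤ u ⊔ v}).Connected

/-- The restriction `I(U)` of a monomial ideal to a subset `U` of the variables:
the ideal generated by the minimal monomial generators supported in `U`. -/
noncomputable def restrictIdeal {kk : Type} [Field kk] {n : ℕ}
    (I : Ideal (MvPolynomial (Fin n) kk)) (U : Set (Fin n)) :
    Ideal (MvPolynomial (Fin n) kk) :=
  Ideal.span { p | ∃ a : Fin n →₀ ℕ, IsMinGen I a ∧ (↑a.support : Set (Fin n)) ⊆ U ∧
    p = monomial a (1 : kk) }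

/-- `I_f`: the ideal generated by the minimal monomial generators of `I` divisible by the
monomial with exponent vector `c`. -/
noncomputable def subIdeal {kk : Type} [Field kk] {n : ℕ}
    (I : Ideal (MvPolynomial (Fin n) kk)) (c : Fin n →₀ ℕ) :
    Ideal (MvPolynomial (Fin n) kk) :=
  Ideal.span { p | ∃ a : Fin n →₀ ℕ, IsMinGen I a ∧ c ≤ a ∧ p = monomial a (1 : kk) }

/-- `Ī_f`: the ideal generated by `g / f` as `g` ranges over the minimal monomial
generators of `I` divisible by the monomial `f` with exponent vector `c`. -/
noncomputable def barIdeal {kk : Type} [Field kk] {n : ℕ}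
    (I : Ideal (MvPolynomial (Fin n) kk)) (c : Fin n →₀ ℕ) :
    Ideal (MvPolynomial (Fin n) kk) :=
  Ideal.span { p | ∃ a : Fin n →₀ ℕ, IsMinGen I a ∧ c ≤ a ∧ p = monomial (a - c) (1 : kk) }

/-- `J_{[d]}`: the squarefree monomial ideal generated by all squarefree monomials of
degree `d` lying in `J`. -/
noncomputable def sqfreePart {kk : Type} [Field kk] {n : ℕ}
    (J : Ideal (MvPolynomial (Fin n) kk)) (d : ℕ) :
    Ideal (MvPolynomial (Fin n) kk) :=
  Ideal.span { p | ∃ T : Finset (Fin n), T.card = d ∧ sqMonomial kk T ∈ J ∧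
    p = sqMonomial kk T }

/-- The Alexander dual `I^∨` of a squarefree monomial ideal `I`: the Stanley–Reisner ideal
of the Alexander dual complex, generated by the squarefree monomials `x_T` such that
`x_{Tᶜ} ∉ I`. -/
noncomputable def alexDual {kk : Type} [Field kk] {n : ℕ}
    (I : Ideal (MvPolynomial (Fin n) kk)) : Ideal (MvPolynomial (Fin n) kk) :=
  Ideal.span { p | ∃ T : Finset (Fin n), sqMonomial kk (Tᶜ) ∉ I ∧ p = sqMonomial kk T }

/- ## Part 2: projective dimension of `S/I`, cohomological dimension, depth, `S_2`, height -/

/-- The `i`-th term of the Koszul complex with coefficients in `S ⧸ I`. -/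
abbrev QModule (kk : Type) [Field kk] (n : ℕ) (I : Ideal (MvPolynomial (Fin n) kk))
    (i : ℕ) : Type :=
  {T : Finset (Fin n) // T.card = i} → (MvPolynomial (Fin n) kk ⧸ I)

/-- The Koszul differential on `S ⧸ I` coefficients. -/
noncomputable def DmapQ (kk : Type) [Field kk] (n : ℕ)
    (I : Ideal (MvPolynomial (Fin n) kk)) (m : ℕ) :
    QModule kk n I (m + 1) →ₗ[kk] QModule kk n I m where
  toFun f T := ∑ t ∈ (T.1ᶜ).attach,
    ((-1 : kk) ^ ((T.1.filter (fun s => s < t.1)).card)) •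
      (Ideal.Quotient.mk I (X t.1) * f ⟨insert t.1 T.1, by
        rw [Finset.card_insert_of_notMem (Finset.mem_compl.mp t.2), T.2]⟩)
  map_add' f g := by
    funext T
    simp [mul_add, smul_add, Finset.sum_add_distrib]
  map_smul' c f := by
    funext T
    dsimp only [RingHom.id_apply, Pi.smul_apply]
    rw [Finset.smul_sum]
    refine Finset.sum_congr rfl fun t _ => ?_
    rw [mul_smul_comm, smul_comm]

/-- The Koszul differential on `S ⧸ I` out of homological degree `i`. -/
noncomputable def DoutQ (kk : Type) [Field kk] (n : ℕ)
    (I : Ideal (MvPolynomial (Fin n) kk)) :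
    (i : ℕ) → (QModule kk n I i →ₗ[kk] QModule kk n I (i - 1))
  | 0 => 0
  | (m + 1) => DmapQ kk n I m

/-- The degree-`m` graded piece of `S ⧸ I` (zero in negative degrees). -/
noncomputable def gradedPieceQ {kk : Type} [Field kk] {n : ℕ}
    (I : Ideal (MvPolynomial (Fin n) kk)) (m : ℤ) :
    Submodule kk (MvPolynomial (Fin n) kk ⧸ I) :=
  if m < 0 then ⊥
  else (homogeneousSubmodule (Fin n) kk m.toNat).map (Ideal.Quotient.mkₐ kk I).toLinearMap

/-- The degree-`j` strand of the Koszul complex of `S ⧸ I` in homological degree `i`. -/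
noncomputable def koszulStrandQ {kk : Type} [Field kk] {n : ℕ}
    (I : Ideal (MvPolynomial (Fin n) kk)) (i : ℕ) (j : ℤ) :
    Submodule kk (QModule kk n I i) :=
  Submodule.pi Set.univ (fun _ => gradedPieceQ I (j - i))

/-- `TorNonzeroQ I i j` states that `Tor_i^S(S/I, k)_j ≠ 0`. -/
noncomputable def TorNonzeroQ {kk : Type} [Field kk] {n : ℕ}
    (I : Ideal (MvPolynomial (Fin n) kk)) (i : ℕ) (j : ℤ) : Prop :=
  ¬ ((koszulStrandQ I i j ⊓ LinearMap.ker (DoutQ kk n I i)) ≤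
      Submodule.map (DmapQ kk n I i) (koszulStrandQ I (i + 1) j))

/-- The projective dimension of `S ⧸ I` over `S = k[x_1,…,x_n]`, via the characterization
`pd(S/I) = max { i : Tor_i^S(S/I, k) ≠ 0 }` by minimal graded free resolutions. -/
noncomputable def projdimQuot {kk : Type} [Field kk] {n : ℕ}
    (I : Ideal (MvPolynomial (Fin n) kk)) : ℕ :=
  sSup { i : ℕ | ∃ j : ℤ, TorNonzeroQ I i j }

/-- The cohomological dimension `cd(R, J)`: the supremum of the `i` such that the local
cohomology `H_J^i(M)` is nonzero for some `R`-module `M`. -/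
noncomputable def cohomologicalDimension (R : Type) [CommRing R] (J : Ideal R) : ℕ :=
  sSup { i : ℕ | ∃ M : ModuleCat R, Nontrivial ((localCohomology J i).obj M) }

/-- `depthGE R J t` : the ideal `J` contains a regular sequence on `R` of length `t`,
i.e. `depth(J, R) ≥ t`. -/
def depthGE (R : Type) [CommRing R] (J : Ideal R) (t : ℕ) : Prop :=
  ∃ rs : List R, rs.length = t ∧ (∀ r ∈ rs, r ∈ J) ∧ RingTheory.Sequence.IsRegular R rs

/-- Serre's condition `(S_2)` for a commutative ring `R`:
`depth R_p ≥ min(2, dim R_p)` for every prime `p`. -/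
def SerreS2 (R : Type) [CommRing R] : Prop :=
  ∀ p : Ideal R, ∀ _ : p.IsPrime,
    ∀ t : ℕ, (t : WithBot ℕ∞) ≤ min 2 (ringKrullDim (Localization.AtPrime p)) →
      depthGE (Localization.AtPrime p)
        (IsLocalRing.maximalIdeal (Localization.AtPrime p)) t

/-- The height of an ideal: the infimum of the heights of the primes containing it. -/
noncomputable def idealHeight {R : Type} [CommRing R] (I : Ideal R) : ℕ∞ :=
  ⨅ p : { p : PrimeSpectrum R // I ≤ p.asIdeal }, Order.height p.1

/-- The numerical function `f(n,d)` of the paper: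
`f(n,d) = 0` if `n < d`, `f(d,d) = d`, and `f(n,d) = ⌊(d-1)n/(d+1)⌋ + 1` for `n > d`. -/
def fval (n d : ℕ) : ℕ :=
  if n < d then 0 else if n = d then d else (d - 1) * n / (d + 1) + 1

/-- The numerical function `g(n,d) = n - ⌊n/(d+1)⌋ - ⌊(n-1)/(d+1)⌋` of the paper. -/
def gval (n d : ℕ) : ℕ := n - n / (d + 1) - (n - 1) / (d + 1)

/-- `I` is a homogeneous ideal: it is stable under taking homogeneous components. -/
def IsHomog {kk : Type} [Field kk] {n : ℕ} (I : Ideal (MvPolynomial (Fin n) kk)) : Prop :=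
  ∀ p ∈ I, ∀ i : ℕ, homogeneousComponent i p ∈ I

/-! Write `J = I(U)` and `J' = I(U \ {t})`, and compute `Tor` by the strands of the Koszul
complex. The Koszul complex of `J` is that of the variable `x_t` tensored with that of the other
variables. Killing `x_t` (dropping the coordinates indexed by sets containing `t`, and the terms
divisible by `x_t`) is a chain map `π`, and the standard contraction `h` of the Koszul complex of
`x_t` (divide by `x_t`, wedge with `e_t`) satisfies `d h = 1 - π` on cycles. As `J'` is generated
by monomials free of `x_t`, `π` maps the strands of `J` to those of `J'` and `h` preserves the
strands of `J'`. So a cycle `z` of a strand of `J'` that bounds `w` in the strand of `J` bounds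
`π w + h z` in the strand of `J'`. Removing the variables outside `U` one at a time, starting from
`I(univ) = I`, proves the theorem. -/

namespace MvPolynomial

variable {σ R : Type*} [CommSemiring R]

@[simps]
noncomputable def divMonomialLinearMap (s : σ →₀ ℕ) :
    MvPolynomial σ R →ₗ[R] MvPolynomial σ R where
  toFun q := q.divMonomial s
  map_add' q r := add_divMonomial q r s
  map_smul' c q := by ext; simp [coeff_divMonomial]

theorem coeff_modMonomial (s : σ →₀ ℕ) (q : MvPolynomial σ R) (a : σ →₀ ℕ) :
    coeff a (q.modMonomial s) = if s ≤ a then 0 else coeff a q := by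
  split_ifs with h
  · exact coeff_modMonomial_of_le q h
  · exact coeff_modMonomial_of_not_le q h

@[simps]
noncomputable def modMonomialLinearMap (s : σ →₀ ℕ) :
    MvPolynomial σ R →ₗ[R] MvPolynomial σ R where
  toFun q := q.modMonomial s
  map_add' q r := by ext; simp only [coeff_modMonomial, coeff_add]; split_ifs <;> simp
  map_smul' c q := by ext; simp only [coeff_modMonomial, coeff_smul]; split_ifs <;> simp

theorem support_modMonomial_subset (s : σ →₀ ℕ) (q : MvPolynomial σ R) :
    (q.modMonomial s).support ⊆ q.support := by
  intro a ha
  rw [mem_support_iff, coeff_modMonomial] at ha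
  split_ifs at ha
  · exact absurd rfl ha
  · exact mem_support_iff.mpr ha

theorem not_le_of_mem_support_modMonomial {s a : σ →₀ ℕ} {q : MvPolynomial σ R}
    (ha : a ∈ (q.modMonomial s).support) : ¬ s ≤ a := by
  intro h
  rw [mem_support_iff, coeff_modMonomial, if_pos h] at ha
  exact ha rfl

theorem IsHomogeneous.modMonomial {q : MvPolynomial σ R} {m : ℕ} (hq : q.IsHomogeneous m)
    (s : σ →₀ ℕ) : (q.modMonomial s).IsHomogeneous m :=
  fun _ ha => hq (mem_support_iff.mp (support_modMonomial_subset s q (mem_support_iff.mpr ha)))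

theorem IsHomogeneous.degree_add_of_coeff_divMonomial_ne_zero {q : MvPolynomial σ R} {m : ℕ}
    (hq : q.IsHomogeneous m) {s a : σ →₀ ℕ} (ha : coeff a (q.divMonomial s) ≠ 0) :
    s.degree + a.degree = m := by
  rw [coeff_divMonomial] at ha
  have h := hq ha
  rw [map_add] at h
  rw [Finsupp.degree_eq_weight_one]
  exact h

theorem IsHomogeneous.divMonomial {q : MvPolynomial σ R} {m : ℕ} (hq : q.IsHomogeneous m)
    (s : σ →₀ ℕ) : (q.divMonomial s).IsHomogeneous (m - s.degree) := by
  intro a ha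
  have h := hq.degree_add_of_coeff_divMonomial_ne_zero ha
  rw [Finsupp.degree_eq_weight_one] at h ⊢
  change (Finsupp.weight fun _ => 1) a = _
  omega

theorem IsHomogeneous.divMonomial_eq_zero {q : MvPolynomial σ R} {m : ℕ} (hq : q.IsHomogeneous m)
    {s : σ →₀ ℕ} (hs : m < s.degree) : q.divMonomial s = 0 := by
  ext a
  by_contra ha
  have := hq.degree_add_of_coeff_divMonomial_ne_zero ha
  omega

variable [DecidableEq σ]

theorem X_mul_modMonomial_single_of_ne {s t : σ} (h : s ≠ t) (q : MvPolynomial σ R) :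
    (X s * q).modMonomial (Finsupp.single t 1) = X s * q.modMonomial (Finsupp.single t 1) := by
  ext a
  simp only [coeff_modMonomial, coeff_X_mul', Finsupp.single_le_iff]
  split_ifs <;> simp_all [Finsupp.tsub_apply, Ne.symm h]

theorem X_mul_divMonomial_single_of_ne {s t : σ} (h : s ≠ t) (q : MvPolynomial σ R) :
    (X s * q).divMonomial (Finsupp.single t 1) = X s * q.divMonomial (Finsupp.single t 1) := by
  ext a
  have hsupp : s ∈ (Finsupp.single t 1 + a).support ↔ s ∈ a.support := by
    simp [Ne.symm h]
  simp only [coeff_divMonomial, coeff_X_mul', hsupp]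
  split_ifs
  · congr 1
    ext u
    simp only [Finsupp.add_apply, Finsupp.tsub_apply, Finsupp.single_apply]
    split_ifs <;> subst_vars <;> first | omega | exact absurd rfl h
  · rfl

end MvPolynomial

section Restriction

open MvPolynomial

variable {kk : Type} [Field kk] {n : ℕ} {I : Ideal (MvPolynomial (Fin n) kk)}

theorem restrictIdeal_eq_span (I : Ideal (MvPolynomial (Fin n) kk)) (U : Set (Fin n)) :
    restrictIdeal I U =
      Ideal.span ((fun a => monomial a (1 : kk)) '' {a | IsMinGen I a ∧ ↑a.support ⊆ U}) := by
  rw [restrictIdeal]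
  congr 1
  ext q
  constructor
  · rintro ⟨a, ha, haU, rfl⟩
    exact ⟨a, ⟨ha, haU⟩, rfl⟩
  · rintro ⟨a, ⟨ha, haU⟩, rfl⟩
    exact ⟨a, ha, haU, rfl⟩

theorem mem_restrictIdeal_iff {U : Set (Fin n)} {q : MvPolynomial (Fin n) kk} :
    q ∈ restrictIdeal I U ↔ ∀ m ∈ q.support, ∃ c, IsMinGen I c ∧ ↑c.support ⊆ U ∧ c ≤ m := by
  simp only [restrictIdeal_eq_span, mem_ideal_span_monomial_image, Set.mem_ofPred_eq,
    and_assoc]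

theorem restrictIdeal_mono {U V : Set (Fin n)} (h : U ⊆ V) :
    restrictIdeal I U ≤ restrictIdeal I V :=
  Ideal.span_mono fun _ ⟨a, ha, haU, hq⟩ => ⟨a, ha, haU.trans h, hq⟩

theorem exists_isMinGen_le {a : Fin n →₀ ℕ} (ha : monomial a (1 : kk) ∈ I) :
    ∃ c, IsMinGen I c ∧ c ≤ a := by
  obtain ⟨c, ⟨hca, hc⟩, hmin⟩ :=
    wellFounded_lt.has_min {b | b ≤ a ∧ monomial b (1 : kk) ∈ I} ⟨a, le_rfl, ha⟩
  exact ⟨c, ⟨hc, fun b hbc hb => by_contra fun hne =>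
    hmin b ⟨hbc.trans hca, hb⟩ (lt_of_le_of_ne hbc hne)⟩, hca⟩

theorem restrictIdeal_univ (hI : IsMonomialIdeal I) : restrictIdeal I Set.univ = I := by
  refine le_antisymm (Ideal.span_le.mpr fun _ ⟨a, ha, _, hq⟩ => hq ▸ ha.1) ?_
  obtain ⟨A, rfl⟩ := hI
  refine Ideal.span_le.mpr ?_
  rintro _ ⟨a, ha, rfl⟩
  obtain ⟨c, hc, hca⟩ := exists_isMinGen_le
    (Ideal.subset_span (Set.mem_image_of_mem (fun a => monomial a (1 : kk)) ha))
  rw [SetLike.mem_coe, mem_restrictIdeal_iff]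
  intro m hm
  rw [Finset.mem_singleton.mp (support_monomial_subset hm)]
  exact ⟨c, hc, Set.subset_univ _, hca⟩

theorem modMonomial_single_mem_restrictIdeal_sdiff {U : Set (Fin n)} {t : Fin n}
    {q : MvPolynomial (Fin n) kk} (hq : q ∈ restrictIdeal I U) :
    q.modMonomial (Finsupp.single t 1) ∈ restrictIdeal I (U \ {t}) := by
  rw [mem_restrictIdeal_iff] at hq ⊢
  intro m hm
  obtain ⟨c, hc, hcU, hcm⟩ := hq m (support_modMonomial_subset _ q hm)
  refine ⟨c, hc, fun u hu => ⟨hcU hu, ?_⟩, hcm⟩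
  rintro rfl
  have hmt := not_le_of_mem_support_modMonomial hm
  rw [Finsupp.single_le_iff, not_le, Nat.lt_one_iff] at hmt
  exact Finsupp.mem_support_iff.mp hu (Nat.le_zero.mp (hmt ▸ hcm u))

theorem divMonomial_single_mem_restrictIdeal {U : Set (Fin n)} {t : Fin n} (ht : t ∉ U)
    {q : MvPolynomial (Fin n) kk} (hq : q ∈ restrictIdeal I U) :
    q.divMonomial (Finsupp.single t 1) ∈ restrictIdeal I U := by
  rw [mem_restrictIdeal_iff] at hq ⊢
  intro m hm
  rw [mem_support_iff, coeff_divMonomial] at hm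
  obtain ⟨c, hc, hcU, hcm⟩ := hq _ (mem_support_iff.mpr hm)
  refine ⟨c, hc, hcU, fun u => ?_⟩
  have hcmu := hcm u
  rw [Finsupp.add_apply, Finsupp.single_apply] at hcmu
  split_ifs at hcmu with htu
  · subst htu
    have : c t = 0 := Finsupp.notMem_support_iff.mp fun h => ht (hcU h)
    omega
  · omega

end Restriction

section GradedPiece

open MvPolynomial

variable {kk : Type} [Field kk] {n : ℕ}

theorem mem_gradedPiece_iff {I : Ideal (MvPolynomial (Fin n) kk)} {m : ℤ}
    {q : MvPolynomial (Fin n) kk} :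
    q ∈ gradedPiece I m ↔
      q = 0 ∨ q ∈ I ∧ ∃ k : ℕ, (k : ℤ) = m ∧ q.IsHomogeneous k := by
  rw [gradedPiece]
  split_ifs with hm
  · rw [Submodule.mem_bot, iff_self_or]
    rintro ⟨_, k, hk, _⟩
    omega
  · refine ⟨fun ⟨hqI, hq⟩ => Or.inr ⟨hqI, m.toNat, by omega, hq⟩, ?_⟩
    rintro (rfl | ⟨hqI, k, rfl, hq⟩)
    · exact zero_mem _
    · exact ⟨hqI, hq⟩

theorem gradedPiece_mono {I J : Ideal (MvPolynomial (Fin n) kk)} (h : I ≤ J) (m : ℤ) :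
    gradedPiece I m ≤ gradedPiece J m := by
  intro q
  simp only [mem_gradedPiece_iff]
  exact Or.imp_right fun ⟨hqI, hk⟩ => ⟨h hqI, hk⟩

variable {I : Ideal (MvPolynomial (Fin n) kk)} {U : Set (Fin n)} {t : Fin n} {m : ℤ}
  {q : MvPolynomial (Fin n) kk}

theorem modMonomial_single_mem_gradedPiece (hq : q ∈ gradedPiece (restrictIdeal I U) m) :
    q.modMonomial (Finsupp.single t 1) ∈ gradedPiece (restrictIdeal I (U \ {t})) m := by
  rw [mem_gradedPiece_iff] at hq ⊢
  rcases hq with rfl | ⟨hqI, k, hk, hq⟩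
  · exact Or.inl (modMonomialLinearMap (R := kk) _).map_zero
  · exact Or.inr ⟨modMonomial_single_mem_restrictIdeal_sdiff hqI, k, hk, hq.modMonomial _⟩

theorem divMonomial_single_mem_gradedPiece (ht : t ∉ U)
    (hq : q ∈ gradedPiece (restrictIdeal I U) m) :
    q.divMonomial (Finsupp.single t 1) ∈ gradedPiece (restrictIdeal I U) (m - 1) := by
  rw [mem_gradedPiece_iff] at hq ⊢
  rcases hq with rfl | ⟨hqI, k, rfl, hq⟩
  · exact Or.inl (zero_divMonomial _)
  rcases k with _ | k
  · exact Or.inl (hq.divMonomial_eq_zero (by simp))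
  · refine Or.inr ⟨divMonomial_single_mem_restrictIdeal ht hqI, k, by push_cast; ring, ?_⟩
    simpa using hq.divMonomial (Finsupp.single t 1)

end GradedPiece

section Koszul

open MvPolynomial Finset

variable {kk : Type} [Field kk] {n : ℕ}

noncomputable def koszulCoord {i : ℕ} (g : KModule kk n i) (S : Finset (Fin n)) :
    MvPolynomial (Fin n) kk :=
  if h : #S = i then g ⟨S, h⟩ else 0

theorem koszulCoord_val {i : ℕ} (g : KModule kk n i) (T : {T : Finset (Fin n) // #T = i}) :
    koszulCoord g T.1 = g T :=
  dif_pos T.2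

def koszulSign (S : Finset (Fin n)) (t : Fin n) : kk :=
  (-1) ^ #{s ∈ S | s < t}

theorem koszulSign_mul_self (S : Finset (Fin n)) (t : Fin n) :
    koszulSign S t * koszulSign S t = (1 : kk) := by
  rw [koszulSign, ← pow_add, ← two_mul, pow_mul, neg_one_sq, one_pow]

theorem koszulSign_insert_self (S : Finset (Fin n)) (t : Fin n) :
    koszulSign (insert t S) t = (koszulSign S t : kk) := by
  rw [koszulSign, koszulSign, filter_insert, if_neg (lt_irrefl t)]

theorem koszulSign_insert {S : Finset (Fin n)} {u : Fin n} (hu : u ∉ S) (t : Fin n) :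
    koszulSign (insert u S) t = (if u < t then -1 else 1) * (koszulSign S t : kk) := by
  rw [koszulSign, koszulSign, filter_insert]
  split_ifs with hut
  · rw [card_insert_of_notMem fun h => hu (mem_filter.mp h).1, pow_succ, mul_comm]
  · rw [one_mul]

theorem koszulSign_insert_mul_koszulSign_insert {S : Finset (Fin n)} {t u : Fin n}
    (ht : t ∉ S) (hu : u ∉ S) (htu : t ≠ u) :
    koszulSign (insert u S) t * koszulSign (insert t S) u =
      -(koszulSign S t * (koszulSign S u : kk)) := by
  rw [koszulSign_insert hu, koszulSign_insert ht]
  rcases htu.lt_or_gt with h | h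
  · rw [if_neg (asymm h), if_pos h]; ring
  · rw [if_pos h, if_neg (asymm h)]; ring

theorem Dmap_apply (m : ℕ) (f : KModule kk n (m + 1)) (T : {T : Finset (Fin n) // #T = m}) :
    Dmap kk n m f T =
      ∑ t ∈ T.1ᶜ, (koszulSign T.1 t : kk) • (X t * koszulCoord f (insert t T.1)) := by
  rw [Dmap, LinearMap.coe_mk, AddHom.coe_mk, ← sum_attach T.1ᶜ]
  refine sum_congr rfl fun t _ => ?_
  rw [koszulCoord, dif_pos]; rfl

variable (t₀ : Fin n)

noncomputable def koszulRetraction {i : ℕ} (g : KModule kk n i) : KModule kk n i :=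
  fun T => if t₀ ∈ T.1 then 0 else (g T).modMonomial (Finsupp.single t₀ 1)

noncomputable def koszulHomotopy {i : ℕ} (g : KModule kk n i) : KModule kk n (i + 1) :=
  fun T => if t₀ ∈ T.1 then
    (koszulSign T.1 t₀ : kk) • (koszulCoord g (T.1.erase t₀)).divMonomial (Finsupp.single t₀ 1)
  else 0

theorem koszulCoord_koszulRetraction {i : ℕ} (g : KModule kk n i) (S : Finset (Fin n)) :
    koszulCoord (koszulRetraction t₀ g) S =
      if t₀ ∈ S then 0 else (koszulCoord g S).modMonomial (Finsupp.single t₀ 1) := by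
  unfold koszulCoord koszulRetraction
  split_ifs <;> first | rfl | exact (map_zero (modMonomialLinearMap (R := kk) _)).symm

theorem koszulCoord_koszulHomotopy {i : ℕ} (g : KModule kk n i) (S : Finset (Fin n)) :
    koszulCoord (koszulHomotopy t₀ g) S =
      if t₀ ∈ S then
        (koszulSign S t₀ : kk) • (koszulCoord g (S.erase t₀)).divMonomial (Finsupp.single t₀ 1)
      else 0 := by
  by_cases hS : #S = i + 1
  · rw [koszulCoord, dif_pos hS]
    rfl
  rw [koszulCoord, dif_neg hS]
  split_ifs with h
  · have : #(S.erase t₀) ≠ i := by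
      have := card_pos.mpr ⟨t₀, h⟩
      rw [card_erase_of_mem h]
      omega
    rw [koszulCoord, dif_neg this, zero_divMonomial, smul_zero]
  · rfl

theorem Dmap_koszulRetraction (m : ℕ) (g : KModule kk n (m + 1)) :
    Dmap kk n m (koszulRetraction t₀ g) = koszulRetraction t₀ (Dmap kk n m g) := by
  funext T
  rw [Dmap_apply]
  by_cases hT : t₀ ∈ T.1
  · simp [koszulRetraction, koszulCoord_koszulRetraction, hT]
  rw [koszulRetraction, if_neg hT, Dmap_apply, ← modMonomialLinearMap_apply, map_sum]
  refine sum_congr rfl fun t _ => ?_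
  rw [map_smul, modMonomialLinearMap_apply, koszulCoord_koszulRetraction]
  rcases eq_or_ne t t₀ with rfl | ht
  · simp
  · rw [if_neg (by simp [Ne.symm ht, hT]), X_mul_modMonomial_single_of_ne ht]

theorem Dmap_koszulHomotopy_apply_of_notMem {i : ℕ} (g : KModule kk n i)
    {T : {T : Finset (Fin n) // #T = i}} (hT : t₀ ∉ T.1) :
    Dmap kk n i (koszulHomotopy t₀ g) T = X t₀ * (g T).divMonomial (Finsupp.single t₀ 1) := by
  rw [Dmap_apply, sum_eq_single_of_mem t₀ (mem_compl.mpr hT)]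
  · rw [koszulCoord_koszulHomotopy, if_pos (mem_insert_self _ _), erase_insert hT,
      koszulSign_insert_self, koszulCoord_val, mul_smul_comm, smul_smul, koszulSign_mul_self,
      one_smul]
  · intro t _ ht
    rw [koszulCoord_koszulHomotopy, if_neg (by simp [Ne.symm ht, hT]), mul_zero, smul_zero]

theorem Dmap_koszulHomotopy_add_koszulHomotopy_Dmap_apply_of_mem {m : ℕ}
    (g : KModule kk n (m + 1)) {T : {T : Finset (Fin n) // #T = m + 1}} (hT : t₀ ∈ T.1) :
    Dmap kk n (m + 1) (koszulHomotopy t₀ g) T + koszulHomotopy t₀ (Dmap kk n m g) T = g T := by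
  set S := T.1.erase t₀ with hS_def
  have hTS : insert t₀ S = T.1 := insert_erase hT
  have ht₀S : t₀ ∉ S := notMem_erase t₀ T.1
  have hS : #S = m := by rw [card_erase_of_mem hT, T.2]; rfl
  have hsign : ∀ t ∉ T.1, koszulSign T.1 t * koszulSign (insert t T.1) t₀ =
      -(koszulSign T.1 t₀ * (koszulSign S t : kk)) := by
    intro t ht
    have htS : t ∉ S := fun h => ht (mem_of_mem_erase h)
    rw [← hTS, insert_comm, koszulSign_insert_self, koszulSign_insert_self,
      koszulSign_insert_mul_koszulSign_insert htS ht₀S (fun h => ht (h ▸ hT)), mul_comm]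
  have hDg : koszulHomotopy t₀ (Dmap kk n m g) T = g T + ∑ t ∈ T.1ᶜ,
      (koszulSign T.1 t₀ * koszulSign S t : kk) •
        (X t * (koszulCoord g (insert t S)).divMonomial (Finsupp.single t₀ 1)) := by
    have hSc : Sᶜ = insert t₀ T.1ᶜ := compl_erase
    have hcoord : koszulCoord (Dmap kk n m g) S = Dmap kk n m g ⟨S, hS⟩ := dif_pos hS
    simp only [koszulHomotopy, if_pos hT, ← hS_def, hcoord, Dmap_apply, hSc,
      sum_insert (notMem_compl.mpr hT), hTS, koszulCoord_val]
    have hsignT : koszulSign T.1 t₀ = (koszulSign S t₀ : kk) := by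
      rw [← hTS, koszulSign_insert_self]
    rw [← divMonomialLinearMap_apply, map_add, map_smul, map_sum, divMonomialLinearMap_apply,
      X_mul_divMonomial, smul_add, smul_smul, hsignT, koszulSign_mul_self, one_smul, smul_sum]
    refine congrArg _ (sum_congr rfl fun t ht => ?_)
    rw [map_smul, divMonomialLinearMap_apply, X_mul_divMonomial_single_of_ne
      (fun h : t = t₀ => mem_compl.mp ht (h ▸ hT)), smul_smul]
  rw [hDg, add_left_comm, Dmap_apply, ← sum_add_distrib, sum_eq_zero, add_zero]
  intro t ht
  have htt₀ : t ≠ t₀ := fun h => mem_compl.mp ht (h ▸ hT)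
  rw [koszulCoord_koszulHomotopy, if_pos (mem_insert_of_mem hT), erase_insert_of_ne htt₀,
    mul_smul_comm, smul_smul, hsign t (mem_compl.mp ht), neg_smul, neg_add_cancel]

theorem koszulHomotopy_zero {i : ℕ} : koszulHomotopy t₀ (0 : KModule kk n i) = 0 := by
  funext T
  simp [koszulHomotopy, koszulCoord]

theorem Dmap_koszulHomotopy_of_Dout_eq_zero {i : ℕ} {g : KModule kk n i}
    (hg : Dout kk n i g = 0) :
    Dmap kk n i (koszulHomotopy t₀ g) = g - koszulRetraction t₀ g := by
  funext T
  rw [Pi.sub_apply, koszulRetraction]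
  split_ifs with hT
  · obtain _ | m := i
    · exact absurd (card_eq_zero.mp T.2 ▸ hT) (notMem_empty t₀)
    rw [sub_zero, ← Dmap_koszulHomotopy_add_koszulHomotopy_Dmap_apply_of_mem t₀ g hT,
      show Dmap kk n m g = 0 from hg, koszulHomotopy_zero, Pi.zero_apply, add_zero]
  · rw [Dmap_koszulHomotopy_apply_of_notMem t₀ g hT]
    exact eq_sub_of_add_eq (divMonomial_add_modMonomial_single _ _)

end Koszul

section Strand

open MvPolynomial

variable {kk : Type} [Field kk] {n : ℕ} {I : Ideal (MvPolynomial (Fin n) kk)} {U : Set (Fin n)}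
  {t₀ : Fin n} {i : ℕ} {j : ℤ}

theorem mem_koszulStrand_iff {z : KModule kk n i} :
    z ∈ koszulStrand I i j ↔ ∀ T, z T ∈ gradedPiece I (j - i) := by
  simp [koszulStrand, Submodule.mem_pi]

theorem koszulCoord_mem_gradedPiece {z : KModule kk n i} (hz : z ∈ koszulStrand I i j)
    (S : Finset (Fin n)) : koszulCoord z S ∈ gradedPiece I (j - i) := by
  rw [koszulCoord]
  split_ifs
  · exact mem_koszulStrand_iff.mp hz _
  · exact zero_mem _

theorem koszulStrand_mono {J : Ideal (MvPolynomial (Fin n) kk)} (h : I ≤ J) :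
    koszulStrand I i j ≤ koszulStrand J i j := fun _ hz =>
  mem_koszulStrand_iff.mpr fun T => gradedPiece_mono h _ (mem_koszulStrand_iff.mp hz T)

theorem koszulRetraction_mem_koszulStrand {w : KModule kk n i}
    (hw : w ∈ koszulStrand (restrictIdeal I U) i j) :
    koszulRetraction t₀ w ∈ koszulStrand (restrictIdeal I (U \ {t₀})) i j := by
  refine mem_koszulStrand_iff.mpr fun T => ?_
  rw [koszulRetraction]
  split_ifs
  · exact zero_mem _
  · exact modMonomial_single_mem_gradedPiece (mem_koszulStrand_iff.mp hw T)

theorem koszulHomotopy_mem_koszulStrand (ht₀ : t₀ ∉ U) {y : KModule kk n i}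
    (hy : y ∈ koszulStrand (restrictIdeal I U) i j) :
    koszulHomotopy t₀ y ∈ koszulStrand (restrictIdeal I U) (i + 1) j := by
  refine mem_koszulStrand_iff.mpr fun T => ?_
  rw [koszulHomotopy]
  split_ifs
  · rw [show j - ↑(i + 1) = j - i - 1 by push_cast; ring]
    exact Submodule.smul_mem _ _
      (divMonomial_single_mem_gradedPiece ht₀ (koszulCoord_mem_gradedPiece hy _))
  · exact zero_mem _

theorem TorNonzero.of_restrictIdeal_sdiff_singleton
    (h : TorNonzero (restrictIdeal I (U \ {t₀})) i j) : TorNonzero (restrictIdeal I U) i j := by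
  intro hexact
  refine h fun z hz => ?_
  obtain ⟨hzJ, hzD⟩ := Submodule.mem_inf.mp hz
  obtain ⟨w, hw, rfl⟩ := hexact (Submodule.mem_inf.mpr
    ⟨koszulStrand_mono (restrictIdeal_mono Set.sdiff_subset) hzJ, hzD⟩)
  refine ⟨koszulRetraction t₀ w + koszulHomotopy t₀ (Dmap kk n i w), Submodule.add_mem _
    (koszulRetraction_mem_koszulStrand hw) (koszulHomotopy_mem_koszulStrand (by simp) hzJ), ?_⟩
  rw [map_add, Dmap_koszulRetraction, Dmap_koszulHomotopy_of_Dout_eq_zero t₀ hzD,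
    add_sub_cancel]

end Strand

section SatisfiesN

variable {kk : Type} [Field kk] {n : ℕ} {I : Ideal (MvPolynomial (Fin n) kk)} {U : Set (Fin n)}
  {d p : ℕ}

theorem SatisfiesN.restrictIdeal_sdiff_singleton (h : SatisfiesN (restrictIdeal I U) d p)
    (t₀ : Fin n) : SatisfiesN (restrictIdeal I (U \ {t₀})) d p :=
  fun i hi j hj => h i hi j hj.of_restrictIdeal_sdiff_singleton

theorem SatisfiesN.restrictIdeal_sdiff (h : SatisfiesN (restrictIdeal I U) d p)
    (W : Finset (Fin n)) : SatisfiesN (restrictIdeal I (U \ W)) d p := by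
  induction W using Finset.induction_on with
  | empty => simpa using h
  | insert t₀ W _ ih =>
    rw [Finset.coe_insert, Set.insert_eq, Set.union_comm, ← Set.sdiff_sdiff]
    exact ih.restrictIdeal_sdiff_singleton t₀

end SatisfiesN

/-- **Lemma 2.2.** If a monomial ideal `I` satisfies property `N_k`, then so does its
restriction `I(U)` to any subset `U` of the variables. -/
theorem restriction_satisfiesN (kk : Type) [Field kk] (n : ℕ)
    (I : Ideal (MvPolynomial (Fin n) kk)) (hmon : IsMonomialIdeal I)
    (d p : ℕ) (hN : SatisfiesN I d p) (U : Set (Fin n)) :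
    SatisfiesN (restrictIdeal I U) d p := by
  classical
  rw [← restrictIdeal_univ hmon] at hN
  simpa using hN.restrictIdeal_sdiff Uᶜ.toFinset
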